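/- Let U = −I be the n×n negative identity payoff matrix for the row player, and let P be any (possibly mixed) portfolio of k column strategies, k < n. Then the pessimistic exploitability of P is at least (n−k)/(nk): in the restricted game (an n×k matrix game) there exists a Nash equilibrium row strategy whose support has size at most k, hence some pure row strategy i is played with probability at least 1/k, and the column player responding with pure column i in the full game gives the row player payoff at most −1/k, while the full-game value is −1/n. -/

import Mathlib

/-! By von Neumann's minimax theorem (a case of Sion's theorem) the game with payoff
`x ⬝ᵥ P *ᵥ y` has a saddle point `(x, y)`. Every row in the support of `x` is a best reply to `y`,
so those rows of `P` lie in the affine hyperplane `{v | v ⬝ᵥ y = c}`, of dimension `k - 1`.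
Carathéodory's theorem in that hyperplane rewrites `x ᵥ* P` as a convex combination of at most
`k` rows, and the corresponding row strategy is still optimal. One of its weights is at least
`1 / k`; against `U = -1` the column player answering with that pure column holds the row player
to at most `-1 / k`, while the value of `U` is `-1 / n`. -/

open Finset Matrix

noncomputable section

/-- Mixed strategies over a finite action set. -/
def simplex (α : Type*) [Fintype α] : Set (α → ℝ) :=
  {x | (∀ i, 0 ≤ x i) ∧ ∑ i, x i = 1}

/-- Expected payoff to the row (maximizing) player. -/
def pay {α β : Type*} [Fintype α] [Fintype β]
    (U : Matrix α β ℝ) (x : α → ℝ) (y : β → ℝ) : ℝ :=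
  ∑ i, ∑ j, x i * U i j * y j

/-- Nash equilibrium of the zero-sum game with row payoff matrix `U`. -/
def isNash {α β : Type*} [Fintype α] [Fintype β]
    (U : Matrix α β ℝ) (x : α → ℝ) (y : β → ℝ) : Prop :=
  x ∈ simplex α ∧ y ∈ simplex β ∧
  (∀ x' ∈ simplex α, pay U x' y ≤ pay U x y) ∧
  (∀ y' ∈ simplex β, pay U x y ≤ pay U x y')

/-- Worst-case (over pure columns) payoff of row strategy `x`. -/
def wc {α β : Type*} [Fintype α] [Fintype β]
    (U : Matrix α β ℝ) (x : α → ℝ) : ℝ :=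
  sInf (Set.range fun j : β => ∑ i, x i * U i j)

end

theorem LinearMap.exists_isSaddlePointOn {E F : Type*} [NormedAddCommGroup E] [NormedSpace ℝ E]
    [FiniteDimensional ℝ E] [NormedAddCommGroup F] [NormedSpace ℝ F] [FiniteDimensional ℝ F]
    (B : E →ₗ[ℝ] F →ₗ[ℝ] ℝ) {X : Set E} {Y : Set F}
    (hX : X.Nonempty) (hXc : Convex ℝ X) (hXk : IsCompact X)
    (hY : Y.Nonempty) (hYc : Convex ℝ Y) (hYk : IsCompact Y) :
    ∃ a ∈ X, ∃ b ∈ Y, IsSaddlePointOn X Y (fun x y => B x y) a b :=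
  Sion.exists_isSaddlePointOn hX hXc hXk
    (fun y _ =>
      (B.flip y).continuous_of_finiteDimensional.lowerSemicontinuous.lowerSemicontinuousOn _)
    (fun y _ => ((B.flip y).convexOn hXc).quasiconvexOn)
    hYc hY hYk
    (fun x _ =>
      (B x).continuous_of_finiteDimensional.upperSemicontinuous.upperSemicontinuousOn _)
    (fun x _ => ((B x).concaveOn hYc).quasiconcaveOn)

theorem AffineIndependent.card_le_finrank_succ_of_sub_mem {E : Type*} [AddCommGroup E]
    [Module ℝ E] [FiniteDimensional ℝ E] {t : Finset E} (ht : AffineIndependent ℝ ((↑) : t → E))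
    {V : Submodule ℝ E} (hV : ∀ a ∈ t, ∀ b ∈ t, a - b ∈ V) :
    #t ≤ Module.finrank ℝ V + 1 := by
  have hspan : vectorSpan ℝ (Set.range ((↑) : t → E)) ≤ V := by
    rw [Subtype.range_coe, vectorSpan_def, Submodule.span_le]
    rintro _ ⟨a, ha, b, hb, rfl⟩
    exact hV a ha b hb
  simpa using ht.card_le_finrank_succ.trans (by gcongr; exact Submodule.finrank_mono hspan)

theorem exists_mem_stdSimplex_sum_smul_eq_card_support_le_card {ι E : Type*} [Fintype ι]
    [AddCommGroup E] [Module ℝ E] (p : ι → E) {t : Finset E} (ht : ↑t ⊆ Set.range p) {u : E}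
    (hu : u ∈ convexHull ℝ (t : Set E)) :
    ∃ x ∈ stdSimplex ℝ ι, ∑ i, x i • p i = u ∧ #{i | x i ≠ 0} ≤ #t := by
  classical
  obtain ⟨w, hw0, hw1, hwu⟩ := mem_convexHull'.1 hu
  obtain ⟨q₀, hq₀⟩ := nonempty_of_sum_ne_zero (hw1 ▸ one_ne_zero)
  have : Nonempty ι := ⟨(ht hq₀).choose⟩
  set σ := Function.invFun p
  refine ⟨fun i => ∑ q ∈ t with σ q = i, w q, ⟨?_, ?_⟩, ?_, ?_⟩
  · exact fun i => sum_nonneg fun q hq => hw0 q (mem_filter.1 hq).1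
  · exact (sum_fiberwise t σ w).trans hw1
  · calc ∑ i, (∑ q ∈ t with σ q = i, w q) • p i
        = ∑ i, ∑ q ∈ t with σ q = i, w q • p (σ q) := by
          simp_rw [sum_smul]
          exact sum_congr rfl fun i _ => sum_congr rfl fun q hq => by
            rw [(mem_filter.1 hq).2]
      _ = ∑ q ∈ t, w q • q := by
          refine (sum_fiberwise t σ _).trans ?_
          exact sum_congr rfl fun q hq => by rw [Function.invFun_eq (ht hq)]
      _ = u := hwu
  · refine (card_le_card fun i hi => ?_).trans (card_image_le (f := σ))
    obtain ⟨q, hq, -⟩ := exists_ne_zero_of_sum_ne_zero (mem_filter.1 hi).2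
    obtain ⟨hqt, rfl⟩ := mem_filter.1 hq
    exact mem_image_of_mem σ hqt

theorem exists_mem_stdSimplex_sum_smul_eq_card_support_le_finrank_add_one {ι E : Type*} [Fintype ι]
    [AddCommGroup E] [Module ℝ E] [FiniteDimensional ℝ E] {x : ι → ℝ} (hx : x ∈ stdSimplex ℝ ι)
    (p : ι → E) (V : Submodule ℝ E) (hV : ∀ i j, x i ≠ 0 → x j ≠ 0 → p i - p j ∈ V) :
    ∃ x' ∈ stdSimplex ℝ ι, ∑ i, x' i • p i = ∑ i, x i • p i ∧
      #{i | x' i ≠ 0} ≤ Module.finrank ℝ V + 1 := by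
  classical
  set S : Set ι := {i | x i ≠ 0}
  have hmem : ∑ i, x i • p i ∈ convexHull ℝ (p '' S) := by
    rw [← sum_filter_of_ne (p := (x · ≠ 0)) fun i _ h hi => h (by rw [hi, zero_smul])]
    refine (convex_convexHull ℝ _).sum_mem (fun i _ => hx.1 i) ?_
      fun i hi => subset_convexHull ℝ _ ⟨i, (mem_filter.1 hi).2, rfl⟩
    rw [sum_filter_ne_zero, hx.2]
  rw [convexHull_eq_union] at hmem
  simp only [Set.mem_iUnion, exists_prop] at hmem
  obtain ⟨t, htS, hind, hut⟩ := hmem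
  have hcard : #t ≤ Module.finrank ℝ V + 1 :=
    hind.card_le_finrank_succ_of_sub_mem fun a ha b hb => by
      obtain ⟨i, hi, rfl⟩ := htS ha
      obtain ⟨j, hj, rfl⟩ := htS hb
      exact hV i j hi hj
  obtain ⟨x', hx', hx'p, hx'card⟩ := exists_mem_stdSimplex_sum_smul_eq_card_support_le_card p
    (htS.trans (Set.image_subset_range _ _)) hut
  exact ⟨x', hx', hx'p, hx'card.trans hcard⟩

section MatrixGame

variable {m n : Type*} [Fintype m] [Fintype n]

theorem Matrix.exists_isSaddlePointOn_stdSimplex [Nonempty m] [Nonempty n] (P : Matrix m n ℝ) :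
    ∃ x ∈ stdSimplex ℝ m, ∃ y ∈ stdSimplex ℝ n,
      IsSaddlePointOn (stdSimplex ℝ m) (stdSimplex ℝ n) (fun x y => x ⬝ᵥ P *ᵥ y) x y :=
  ((dotProductBilin ℝ ℝ).compl₂ P.mulVecLin).exists_isSaddlePointOn
    Set.Nonempty.of_subtype (convex_stdSimplex ℝ m) (isCompact_stdSimplex ℝ m)
    Set.Nonempty.of_subtype (convex_stdSimplex ℝ n) (isCompact_stdSimplex ℝ n)

theorem IsSaddlePointOn.mulVec_eq_of_ne_zero {P : Matrix m n ℝ} {x : m → ℝ} {y : n → ℝ}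
    (hx : x ∈ stdSimplex ℝ m) (hy : y ∈ stdSimplex ℝ n)
    (h : IsSaddlePointOn (stdSimplex ℝ m) (stdSimplex ℝ n) (fun x y => x ⬝ᵥ P *ᵥ y) x y)
    {i : m} (hi : x i ≠ 0) : (P *ᵥ y) i = x ⬝ᵥ P *ᵥ y := by
  classical
  have hle : ∀ j, x ⬝ᵥ P *ᵥ y ≤ (P *ᵥ y) j := fun j => by
    simpa using h _ (single_mem_stdSimplex ℝ j) y hy
  have hsum : ∑ j, x j * ((P *ᵥ y) j - x ⬝ᵥ P *ᵥ y) = 0 := by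
    simp only [mul_sub, sum_sub_distrib, ← sum_mul, hx.2, one_mul]
    exact sub_self _
  have := (sum_eq_zero_iff_of_nonneg fun j _ =>
    mul_nonneg (hx.1 j) (sub_nonneg.2 (hle j))).1 hsum i (mem_univ i)
  exact sub_eq_zero.1 ((mul_eq_zero.1 this).resolve_left hi)

theorem Matrix.finrank_ker_dotProduct_add_one_le {y : n → ℝ} (hy : y ≠ 0) :
    Module.finrank ℝ (LinearMap.ker (dotProductBilin ℝ ℝ |>.flip y)) + 1 ≤ Fintype.card n := by
  have hlt := Submodule.finrank_lt (s := LinearMap.ker (dotProductBilin ℝ ℝ |>.flip y)) fun h => by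
    have : y ∈ LinearMap.ker (dotProductBilin ℝ ℝ |>.flip y) := h ▸ Submodule.mem_top
    exact hy (dotProduct_self_eq_zero.1 (LinearMap.mem_ker.1 this))
  simpa using hlt

theorem Matrix.exists_isSaddlePointOn_card_support_le [Nonempty m] [Nonempty n]
    (P : Matrix m n ℝ) :
    ∃ x ∈ stdSimplex ℝ m, ∃ y ∈ stdSimplex ℝ n,
      IsSaddlePointOn (stdSimplex ℝ m) (stdSimplex ℝ n) (fun x y => x ⬝ᵥ P *ᵥ y) x y ∧
      #{i | x i ≠ 0} ≤ Fintype.card n := by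
  obtain ⟨x₀, hx₀, y, hy, h⟩ := P.exists_isSaddlePointOn_stdSimplex
  have hy0 : y ≠ 0 := fun h0 => by simpa [h0] using hy.2
  have hrows : ∀ i j, x₀ i ≠ 0 → x₀ j ≠ 0 →
      P i - P j ∈ LinearMap.ker (dotProductBilin ℝ ℝ |>.flip y) := fun i j hi hj => by
    rw [LinearMap.mem_ker, LinearMap.flip_apply, dotProductBilin_apply_apply, sub_dotProduct]
    change (P *ᵥ y) i - (P *ᵥ y) j = 0
    rw [h.mulVec_eq_of_ne_zero hx₀ hy hi, h.mulVec_eq_of_ne_zero hx₀ hy hj, sub_self]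
  obtain ⟨x, hx, hxP, hcard⟩ :=
    exists_mem_stdSimplex_sum_smul_eq_card_support_le_finrank_add_one hx₀ P _ hrows
  rw [← vecMul_eq_sum, ← vecMul_eq_sum] at hxP
  refine ⟨x, hx, y, hy, fun a ha b hb => ?_, hcard.trans (finrank_ker_dotProduct_add_one_le hy0)⟩
  simpa only [dotProduct_mulVec, hxP] using h a ha b hb

theorem pay_eq_dotProduct_mulVec (U : Matrix m n ℝ) (x : m → ℝ) (y : n → ℝ) :
    pay U x y = x ⬝ᵥ U *ᵥ y := by
  simp only [pay, dotProduct, mulVec, mul_sum, mul_assoc]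

theorem isNash_neg_of_isSaddlePointOn {P : Matrix m n ℝ} {x : m → ℝ} {y : n → ℝ}
    (hx : x ∈ simplex m) (hy : y ∈ simplex n)
    (h : IsSaddlePointOn (stdSimplex ℝ m) (stdSimplex ℝ n) (fun x y => x ⬝ᵥ P *ᵥ y) x y) :
    isNash (-P) x y := by
  simp only [isNash, pay_eq_dotProduct_mulVec, neg_mulVec, dotProduct_neg, neg_le_neg_iff]
  exact ⟨hx, hy, fun x' hx' => h x' hx' y hy, fun y' hy' => h x hx y' hy'⟩

theorem wc_le (U : Matrix m n ℝ) (x : m → ℝ) (j : n) : wc U x ≤ ∑ i, x i * U i j :=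
  csInf_le (Set.finite_range _).bddBelow ⟨j, rfl⟩

theorem wc_neg_one_le [DecidableEq m] (x : m → ℝ) (j : m) : wc (-1 : Matrix m m ℝ) x ≤ -x j := by
  simpa [one_apply] using wc_le (-1 : Matrix m m ℝ) x j

end MatrixGame

theorem exists_one_le_card_support_mul {ι : Type*} [Fintype ι] {x : ι → ℝ}
    (hx : x ∈ stdSimplex ℝ ι) : ∃ i, 1 ≤ (#{i | x i ≠ 0} : ℝ) * x i := by
  set s := ({i | x i ≠ 0} : Finset ι)
  have hs : ∑ i ∈ s, x i = 1 := by rw [sum_filter_ne_zero, hx.2]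
  have hne : s.Nonempty := nonempty_of_sum_ne_zero (by rw [hs]; exact one_ne_zero)
  obtain ⟨i, -, hi⟩ := exists_le_of_sum_le hne (f := fun _ => (1 : ℝ))
    (g := fun i => (#s : ℝ) * x i) (by rw [← mul_sum, hs]; simp)
  exact ⟨i, hi⟩

theorem stmt6_general (n k : ℕ) (hk0 : 0 < k) (hkn : k < n)
    (P : Matrix (Fin n) (Fin k) ℝ) :
    let U : Matrix (Fin n) (Fin n) ℝ := -(1 : Matrix (Fin n) (Fin n) ℝ)
    ∃ x y, isNash (U * P) x y ∧ ((n:ℝ) - k)/((n:ℝ) * k) ≤ (-1/n : ℝ) - wc U x := by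
  intro U
  have : NeZero n := ⟨by omega⟩
  have : NeZero k := ⟨by omega⟩
  obtain ⟨x, hx, y, hy, hxy, hsupp⟩ := P.exists_isSaddlePointOn_card_support_le
  obtain ⟨i, hi⟩ := exists_one_le_card_support_mul hx
  have hxi : 1 / (k : ℝ) ≤ x i := by
    rw [div_le_iff₀ (by positivity), mul_comm]
    exact hi.trans (by gcongr; exacts [hx.1 i, by simpa using hsupp])
  refine ⟨x, y, by simpa [U] using isNash_neg_of_isSaddlePointOn hx hy hxy, ?_⟩
  have hwc : wc U x ≤ -x i := wc_neg_one_le x i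
  have hn : (n : ℝ) ≠ 0 := Nat.cast_ne_zero.2 (by omega)
  calc ((n:ℝ) - k) / ((n:ℝ) * k) = 1 / k - 1 / n := by field_simp
    _ ≤ -1 / n - wc U x := by rw [neg_div]; linarith

theorem stmt6 (n k : ℕ) (hk0 : 0 < k) (hkn : k < n)
    (P : Matrix (Fin n) (Fin k) ℝ) (hP : ∀ z, (fun j => P j z) ∈ simplex (Fin n)) :
    let U : Matrix (Fin n) (Fin n) ℝ := -(1 : Matrix (Fin n) (Fin n) ℝ)
    ∃ x y, isNash (U * P) x y ∧ ((n:ℝ) - k)/((n:ℝ) * k) ≤ (-1/n : ℝ) - wc U x :=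
  stmt6_general n k hk0 hkn P
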